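/- arXiv:2407.02357 — 6 statements merged into one kernel-verified Lean document; each statement's English description precedes it below -/
import Mathlib

section
/- Let B_1, ..., B_r be unit vectors in R^n with |⟨B_i, B_j⟩| ≤ δ for all i ≠ j, and let B_1'', ..., B_r'' be the result of (unnormalized) Gram–Schmidt: B_j'' = B_j − Σ_{i<j} ⟨B_i'', B_j⟩ B_i''. Then for each i, ‖B_i'' − B_i‖ ≤ (2^{i−1} − 1)δ and |⟨B_i'', B_j⟩| ≤ 2^{i−1} δ for all j > i. -/
noncomputable def Smap {n r : ℕ} (B'' : Fin r → EuclideanSpace ℝ (Fin n)) (m : ℕ)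
    (u v : EuclideanSpace ℝ (Fin n)) : ℝ :=
  (inner ℝ u v : ℝ) - ∑ i ∈ Finset.univ.filter (fun i : Fin r => (i : ℕ) < m),
    (inner ℝ (B'' i) u : ℝ) * (inner ℝ (B'' i) v : ℝ)

lemma Smap_comm {n r : ℕ} (B'' : Fin r → EuclideanSpace ℝ (Fin n)) (m : ℕ)
    (u v : EuclideanSpace ℝ (Fin n)) : Smap B'' m u v = Smap B'' m v u := by
  unfold Smap
  rw [real_inner_comm]
  congr 1
  exact Finset.sum_congr rfl fun i _ => by ring

lemma Smap_expand {n r : ℕ} (B'' : Fin r → EuclideanSpace ℝ (Fin n)) (m : ℕ)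
    (u v : EuclideanSpace ℝ (Fin n)) (t : ℝ) :
    Smap B'' m (v + t • u) (v + t • u)
      = Smap B'' m u u * t ^ 2 + 2 * Smap B'' m u v * t + Smap B'' m v v := by
  unfold Smap
  have h1 : ∀ i : Fin r, (inner ℝ (B'' i) (v + t • u) : ℝ)
      = (inner ℝ (B'' i) v : ℝ) + t * (inner ℝ (B'' i) u : ℝ) := by
    intro i; rw [inner_add_right, real_inner_smul_right]
  have h2 : (inner ℝ (v + t • u) (v + t • u) : ℝ)
      = (inner ℝ v v : ℝ) + 2 * t * (inner ℝ v u : ℝ) + t ^ 2 * (inner ℝ u u : ℝ) := by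
    rw [real_inner_add_add_self, real_inner_smul_right, real_inner_smul_left,
      real_inner_smul_right]
    ring
  simp only [h1, h2]
  have h3 : ∀ i ∈ Finset.univ.filter (fun i : Fin r => (i : ℕ) < m),
      ((inner ℝ (B'' i) v : ℝ) + t * inner ℝ (B'' i) u) * ((inner ℝ (B'' i) v : ℝ) + t * inner ℝ (B'' i) u)
      = (inner ℝ (B'' i) v : ℝ) * inner ℝ (B'' i) v
        + 2 * t * ((inner ℝ (B'' i) v : ℝ) * inner ℝ (B'' i) u)
        + t ^ 2 * ((inner ℝ (B'' i) u : ℝ) * inner ℝ (B'' i) u) := by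
    intro i _; ring
  rw [Finset.sum_congr rfl h3]
  rw [Finset.sum_add_distrib, Finset.sum_add_distrib, ← Finset.mul_sum, ← Finset.mul_sum]
  rw [real_inner_comm u v]
  have h4 : ∀ i ∈ Finset.univ.filter (fun i : Fin r => (i : ℕ) < m),
      (inner ℝ (B'' i) v : ℝ) * inner ℝ (B'' i) u = (inner ℝ (B'' i) u : ℝ) * inner ℝ (B'' i) v := by
    intro i _; ring
  rw [Finset.sum_congr rfl h4]
  ring

lemma Smap_CS {n r : ℕ} (B'' : Fin r → EuclideanSpace ℝ (Fin n)) (m : ℕ)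
    (hpos : ∀ w, 0 ≤ Smap B'' m w w) (u v : EuclideanSpace ℝ (Fin n)) :
    Smap B'' m u v ^ 2 ≤ Smap B'' m u u * Smap B'' m v v := by
  have hd := discrim_le_zero (a := Smap B'' m u u) (b := 2 * Smap B'' m u v)
    (c := Smap B'' m v v) (fun t => by nlinarith [hpos (v + t • u), Smap_expand B'' m u v t])
  rw [discrim] at hd
  nlinarith [hd]

lemma Smap_inner {n r : ℕ} (B B'' : Fin r → EuclideanSpace ℝ (Fin n))
    (hGS : ∀ j, B'' j = B j -
      ∑ i ∈ Finset.univ.filter (fun i => i < j), (inner ℝ (B'' i) (B j) : ℝ) • B'' i) :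
    ∀ j : Fin r, ∀ v, (inner ℝ (B'' j) v : ℝ) = Smap B'' (j : ℕ) (B j) v := by
    intro j v
    have hsets : Finset.univ.filter (fun i : Fin r => i < j)
        = Finset.univ.filter (fun i : Fin r => (i : ℕ) < (j : ℕ)) := by
      apply Finset.filter_congr
      intro i _
      exact Iff.rfl
    rw [hGS j]
    unfold Smap
    rw [inner_sub_left, sum_inner, hsets]
    congr 1
    exact Finset.sum_congr rfl fun i _ => real_inner_smul_left _ _ _

lemma Smap_diag_le {n r : ℕ} (B'' : Fin r → EuclideanSpace ℝ (Fin n)) (m : ℕ)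
    (v : EuclideanSpace ℝ (Fin n)) : Smap B'' m v v ≤ (inner ℝ v v : ℝ) := by
  unfold Smap
  have : (0:ℝ) ≤ ∑ i ∈ Finset.univ.filter (fun i : Fin r => (i : ℕ) < m),
      (inner ℝ (B'' i) v : ℝ) * (inner ℝ (B'' i) v : ℝ) :=
    Finset.sum_nonneg fun i _ => mul_self_nonneg _
  linarith

lemma Smap_nonneg {n r : ℕ} (B B'' : Fin r → EuclideanSpace ℝ (Fin n))
    (hunit : ∀ i, ‖B i‖ = 1)
    (hGS : ∀ j, B'' j = B j -
      ∑ i ∈ Finset.univ.filter (fun i => i < j), (inner ℝ (B'' i) (B j) : ℝ) • B'' i) :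
    ∀ m : ℕ, ∀ v, 0 ≤ Smap B'' m v v := by
  have key := Smap_inner B B'' hGS
  intro m
  induction m with
  | zero =>
    intro v
    have he : Finset.univ.filter (fun i : Fin r => (i : ℕ) < 0) = ∅ := by simp
    unfold Smap
    rw [he, Finset.sum_empty, sub_zero]
    exact real_inner_self_nonneg
  | succ m ih =>
    intro v
    by_cases hm : m < r
    · set j : Fin r := ⟨m, hm⟩ with hj
      have hset : Finset.univ.filter (fun i : Fin r => (i : ℕ) < m + 1)
          = insert j (Finset.univ.filter (fun i : Fin r => (i : ℕ) < m)) := by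
        ext i
        simp only [Finset.mem_filter, Finset.mem_insert, Finset.mem_univ, true_and]
        constructor
        · intro h
          rcases Nat.lt_succ_iff_lt_or_eq.mp h with h | h
          · exact Or.inr h
          · exact Or.inl (Fin.ext h)
        · rintro (rfl | h)
          · exact Nat.lt_succ_self m
          · exact Nat.lt_succ_of_lt h
      have hnotmem : j ∉ Finset.univ.filter (fun i : Fin r => (i : ℕ) < m) := by
        simp [hj]
      have hS1 : Smap B'' j (B j) (B j) ≤ 1 := by
        unfold Smap
        have : (inner ℝ (B j) (B j) : ℝ) = 1 := by
          rw [real_inner_self_eq_norm_sq, hunit j]; norm_num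
        rw [this]
        have : (0:ℝ) ≤ ∑ i ∈ Finset.univ.filter (fun i : Fin r => (i : ℕ) < (j:ℕ)),
            (inner ℝ (B'' i) (B j) : ℝ) * (inner ℝ (B'' i) (B j) : ℝ) :=
          Finset.sum_nonneg fun i _ => mul_self_nonneg _
        linarith
      have hCS := Smap_CS B'' m ih (B j) v
      have expand : Smap B'' (m+1) v v = Smap B'' m v v - (inner ℝ (B'' j) v : ℝ) ^ 2 := by
        unfold Smap
        rw [hset, Finset.sum_insert hnotmem]
        ring
      have hjm : ((j : ℕ)) = m := rfl
      rw [hjm] at hS1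
      rw [expand, key j v, hjm]
      nlinarith [ih v, ih (B j), hS1, hCS]
    · have hset : Finset.univ.filter (fun i : Fin r => (i : ℕ) < m + 1)
          = Finset.univ.filter (fun i : Fin r => (i : ℕ) < m) := by
        ext i
        simp only [Finset.mem_filter, Finset.mem_univ, true_and]
        have := i.isLt
        omega
      unfold Smap
      rw [hset]
      exact ih v


lemma norm_B''_le_one {n r : ℕ} (B B'' : Fin r → EuclideanSpace ℝ (Fin n))
    (hunit : ∀ i, ‖B i‖ = 1)
    (hGS : ∀ j, B'' j = B j -
      ∑ i ∈ Finset.univ.filter (fun i => i < j), (inner ℝ (B'' i) (B j) : ℝ) • B'' i) :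
    ∀ j, ‖B'' j‖ ≤ 1 := by
  intro j
  have hpos := Smap_nonneg B B'' hunit hGS (j : ℕ)
  have hCS := Smap_CS B'' (j : ℕ) hpos (B j) (B'' j)
  have hkey := Smap_inner B B'' hGS j (B'' j)
  have h1 : Smap B'' (j : ℕ) (B j) (B j) ≤ 1 := by
    have := Smap_diag_le B'' (j : ℕ) (B j)
    have h2 : (inner ℝ (B j) (B j) : ℝ) = 1 := by
      rw [real_inner_self_eq_norm_sq, hunit j]; norm_num
    linarith
  have h3 : Smap B'' (j : ℕ) (B'' j) (B'' j) ≤ ‖B'' j‖ ^ 2 := by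
    have := Smap_diag_le B'' (j : ℕ) (B'' j)
    rw [real_inner_self_eq_norm_sq] at this
    exact this
  have h4 : (inner ℝ (B'' j) (B'' j) : ℝ) = ‖B'' j‖ ^ 2 := by
    rw [real_inner_self_eq_norm_sq]
  have h5 : (‖B'' j‖ ^ 2) ^ 2 ≤ ‖B'' j‖ ^ 2 := by
    rw [← h4, hkey]
    nlinarith [hpos (B j), hpos (B'' j)]
  nlinarith [norm_nonneg (B'' j), h5, sq_nonneg (‖B'' j‖ - 1), sq_nonneg (‖B'' j‖ + 1)]


/-- Gram–Schmidt on nearly orthogonal unit vectors: ‖B''_i − B_i‖ ≤ (2^{i-1}−1)δ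
and |⟨B''_i, B_j⟩| ≤ 2^{i-1} δ for j > i (here indices are 0-based, so the bounds read
(2^i − 1)δ and 2^i δ for the 0-based index i). -/
theorem stmt3 {n r : ℕ} (δ : ℝ) (B B'' : Fin r → EuclideanSpace ℝ (Fin n))
    (hunit : ∀ i, ‖B i‖ = 1)
    (hδ : ∀ i j, i ≠ j → |(inner ℝ (B i) (B j) : ℝ)| ≤ δ)
    (hGS : ∀ j, B'' j = B j -
      ∑ i ∈ Finset.univ.filter (fun i => i < j), (inner ℝ (B'' i) (B j) : ℝ) • B'' i) :
    ∀ i : Fin r, ‖B'' i - B i‖ ≤ ((2:ℝ) ^ (i : ℕ) - 1) * δ ∧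
      ∀ j, i < j → |(inner ℝ (B'' i) (B j) : ℝ)| ≤ (2:ℝ) ^ (i : ℕ) * δ := by
  have hnorm := norm_B''_le_one B B'' hunit hGS
  suffices H : ∀ m : ℕ, ∀ i : Fin r, (i : ℕ) < m →
      (‖B'' i - B i‖ ≤ ((2:ℝ) ^ (i : ℕ) - 1) * δ ∧
        ∀ j, i < j → |(inner ℝ (B'' i) (B j) : ℝ)| ≤ (2:ℝ) ^ (i : ℕ) * δ) by
    exact fun i => H ((i : ℕ) + 1) i (Nat.lt_succ_self _)
  intro m
  induction m with
  | zero => intro i hi; omega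
  | succ m ih =>
    intro i hi
    have hgeom : ∑ k ∈ Finset.univ.filter (fun k : Fin r => k < i), (2:ℝ) ^ (k : ℕ)
        = (2:ℝ) ^ (i : ℕ) - 1 := by
      rw [Finset.sum_filter]
      simp only [Fin.lt_def]
      rw [Fin.sum_univ_eq_sum_range (fun k => if k < (i : ℕ) then (2:ℝ) ^ k else 0) r]
      rw [← Finset.sum_subset (Finset.range_subset_range.mpr (le_of_lt i.isLt))
        (fun x _ hnx => if_neg (by simpa using hnx))]
      rw [Finset.sum_congr rfl (fun x hx => if_pos (Finset.mem_range.mp hx))]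
      rw [geom_sum_eq (by norm_num : (2:ℝ) ≠ 1)]
      norm_num
    have part1 : ‖B'' i - B i‖ ≤ ((2:ℝ) ^ (i : ℕ) - 1) * δ := by
      have hdiff : B'' i - B i
          = -∑ k ∈ Finset.univ.filter (fun k => k < i), (inner ℝ (B'' k) (B i) : ℝ) • B'' k := by
        rw [hGS i]
        exact sub_sub_cancel_left _ _
      rw [hdiff, norm_neg]
      calc ‖∑ k ∈ Finset.univ.filter (fun k => k < i), (inner ℝ (B'' k) (B i) : ℝ) • B'' k‖
          ≤ ∑ k ∈ Finset.univ.filter (fun k => k < i), ‖(inner ℝ (B'' k) (B i) : ℝ) • B'' k‖ :=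
            norm_sum_le _ _
        _ ≤ ∑ k ∈ Finset.univ.filter (fun k : Fin r => k < i), (2:ℝ) ^ (k : ℕ) * δ := by
            apply Finset.sum_le_sum
            intro k hk
            have hki : k < i := (Finset.mem_filter.mp hk).2
            have hkm : (k : ℕ) < m := by
              have := Fin.lt_def.mp hki
              omega
            have hIH := (ih k hkm).2 i hki
            rw [norm_smul, Real.norm_eq_abs]
            calc |(inner ℝ (B'' k) (B i) : ℝ)| * ‖B'' k‖
                ≤ |(inner ℝ (B'' k) (B i) : ℝ)| :=
                  mul_le_of_le_one_right (abs_nonneg _) (hnorm k)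
              _ ≤ (2:ℝ) ^ (k : ℕ) * δ := hIH
        _ = (∑ k ∈ Finset.univ.filter (fun k : Fin r => k < i), (2:ℝ) ^ (k : ℕ)) * δ := by
            rw [Finset.sum_mul]
        _ = ((2:ℝ) ^ (i : ℕ) - 1) * δ := by rw [hgeom]
    refine ⟨part1, fun j hij => ?_⟩
    have hsplit : (inner ℝ (B'' i) (B j) : ℝ)
        = (inner ℝ (B i) (B j) : ℝ) + (inner ℝ (B'' i - B i) (B j) : ℝ) := by
      rw [inner_sub_left]; ring
    calc |(inner ℝ (B'' i) (B j) : ℝ)|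
        ≤ |(inner ℝ (B i) (B j) : ℝ)| + |(inner ℝ (B'' i - B i) (B j) : ℝ)| := by
          rw [hsplit]; exact abs_add_le _ _
      _ ≤ δ + ‖B'' i - B i‖ * ‖B j‖ :=
          add_le_add (hδ i j (ne_of_lt hij)) (abs_real_inner_le_norm _ _)
      _ = δ + ‖B'' i - B i‖ := by rw [hunit j, mul_one]
      _ ≤ δ + ((2:ℝ) ^ (i : ℕ) - 1) * δ := by linarith [part1]
      _ = (2:ℝ) ^ (i : ℕ) * δ := by ring
end

section
/- Let M' be a symmetric n × n matrix with eigendecomposition M' = Σ_{i=1}^r ν_i B_i' (B_i')^T where B_1', ..., B_r' are orthonormal, and let v be a unit vector with ‖M' v − ν_i v‖ ≤ ε for some index i. Set ν = min over i < j ≤ r of min(|ν_i − ν_j|, |ν_i|), assumed positive. Then ⟨B_i', v⟩² ≥ 1 − (ε/ν)², and consequently min(‖v − B_i'‖, ‖v + B_i'‖) ≤ √2 · ε/ν. -/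
/-!
Write `c j = ⟪B' j, v⟫` and `q = v - ∑ c j • B' j`, which is orthogonal to every `B' j`. Then
`M' v - ν i v = ∑ (ν j - ν i) c j • B' j - ν i • q`, so by Pythagoras
`‖M' v - ν i v‖² = ∑_{j ≠ i} (ν j - ν i)² c j² + ν i² ‖q‖² ≥ νmin² (∑_{j ≠ i} c j² + ‖q‖²) = νmin² (1 - c i²)`.
For the second claim, `‖v ∓ B' i‖² = 2 ∓ 2 c i`, and the better sign gives `2 - 2 |c i| ≤ 2 - 2 c i²`.
-/

open scoped InnerProductSpace

section Orthonormal

variable {ι E : Type*} [Fintype ι] [NormedAddCommGroup E] [InnerProductSpace ℝ E] {B : ι → E}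

theorem Orthonormal.inner_sub_sum_inner_smul_eq_zero (hB : Orthonormal ℝ B) (v : E) (j : ι) :
    ⟪B j, v - ∑ k, ⟪B k, v⟫_ℝ • B k⟫_ℝ = 0 := by
  rw [inner_sub_right, hB.inner_right_fintype, sub_self]

theorem Orthonormal.norm_sum_smul_add_sq (hB : Orthonormal ℝ B) (a : ι → ℝ) {q : E}
    (hq : ∀ j, ⟪B j, q⟫_ℝ = 0) : ‖∑ j, a j • B j + q‖ ^ 2 = ∑ j, a j ^ 2 + ‖q‖ ^ 2 := by
  have horth : ⟪∑ j, a j • B j, q⟫_ℝ = 0 := by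
    simp only [sum_inner, inner_smul_left, hq, mul_zero, Finset.sum_const_zero]
  rw [norm_add_sq_real, horth, mul_zero, add_zero, ← real_inner_self_eq_norm_sq, hB.inner_sum]
  simp only [conj_trivial, sq]

theorem Orthonormal.sq_mul_norm_sq_sub_inner_sq_le (hB : Orthonormal ℝ B) {ν : ι → ℝ} {δ : ℝ}
    (hδ : 0 ≤ δ) (i : ι) (hgap : ∀ j, j ≠ i → δ ≤ |ν j - ν i|) (habs : δ ≤ |ν i|) (v : E) :
    δ ^ 2 * (‖v‖ ^ 2 - ⟪B i, v⟫_ℝ ^ 2) ≤ ‖∑ j, (ν j * ⟪B j, v⟫_ℝ) • B j - ν i • v‖ ^ 2 := by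
  classical
  set c : ι → ℝ := fun j => ⟪B j, v⟫_ℝ
  set q := v - ∑ j, c j • B j
  have hq : ∀ j, ⟪B j, q⟫_ℝ = 0 := hB.inner_sub_sum_inner_smul_eq_zero v
  have hv : ‖v‖ ^ 2 = ∑ j, c j ^ 2 + ‖q‖ ^ 2 := by
    rw [← hB.norm_sum_smul_add_sq c hq, add_sub_cancel]
  have hw : ∑ j, (ν j * c j) • B j - ν i • v = ∑ j, ((ν j - ν i) * c j) • B j + (-ν i) • q := by
    simp only [q, sub_mul, sub_smul, Finset.sum_sub_distrib, ← smul_smul, ← Finset.smul_sum]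
    module
  have hgap_sq : ∀ j, j ≠ i → δ ^ 2 * c j ^ 2 ≤ ((ν j - ν i) * c j) ^ 2 := fun j hj => by
    rw [mul_pow, ← sq_abs (ν j - ν i)]
    gcongr
    exact hgap j hj
  have habs_sq : δ ^ 2 * ‖q‖ ^ 2 ≤ (-ν i) ^ 2 * ‖q‖ ^ 2 := by
    rw [← sq_abs (-ν i), abs_neg]
    gcongr
  have hsum : δ ^ 2 * ∑ j ∈ Finset.univ.erase i, c j ^ 2
      ≤ ∑ j ∈ Finset.univ.erase i, ((ν j - ν i) * c j) ^ 2 := by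
    rw [Finset.mul_sum]
    exact Finset.sum_le_sum fun j hj => hgap_sq j (Finset.ne_of_mem_erase hj)
  rw [hw, hB.norm_sum_smul_add_sq _ fun j => by rw [inner_smul_right, hq, mul_zero], norm_smul,
    Real.norm_eq_abs, mul_pow, sq_abs, hv, ← Finset.add_sum_erase _ _ (Finset.mem_univ i),
    ← Finset.add_sum_erase _ _ (Finset.mem_univ i), sub_self, zero_mul]
  linarith

end Orthonormal

theorem min_norm_sub_norm_add_le {E : Type*} [NormedAddCommGroup E] [InnerProductSpace ℝ E]
    {u v : E} (hu : ‖u‖ = 1) (hv : ‖v‖ = 1) {t : ℝ} (ht : 0 ≤ t)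
    (h : 1 - t ^ 2 ≤ ⟪u, v⟫_ℝ ^ 2) : min ‖v - u‖ ‖v + u‖ ≤ Real.sqrt 2 * t := by
  set c := ⟪u, v⟫_ℝ
  have hc : |c| ≤ 1 := by simpa [hu, hv] using abs_real_inner_le_norm u v
  have hc_sq : c ^ 2 ≤ |c| := by
    rw [← sq_abs]
    nlinarith [abs_nonneg c]
  have hsub : ‖v - u‖ ^ 2 = 2 - 2 * c := by
    rw [norm_sub_sq_real, hu, hv, real_inner_comm]; ring
  have hadd : ‖v + u‖ ^ 2 = 2 + 2 * c := by
    rw [norm_add_sq_real, hu, hv, real_inner_comm]; ring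
  have hsq : min ‖v - u‖ ‖v + u‖ ^ 2 ≤ (Real.sqrt 2 * t) ^ 2 := by
    rw [mul_pow, Real.sq_sqrt zero_le_two]
    rcases abs_cases c with ⟨habs, -⟩ | ⟨habs, -⟩
    · calc min ‖v - u‖ ‖v + u‖ ^ 2 ≤ ‖v - u‖ ^ 2 := by gcongr; exact min_le_left _ _
        _ ≤ 2 * t ^ 2 := by linarith
    · calc min ‖v - u‖ ‖v + u‖ ^ 2 ≤ ‖v + u‖ ^ 2 := by gcongr; exact min_le_right _ _
        _ ≤ 2 * t ^ 2 := by linarith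
  exact (pow_le_pow_iff_left₀ (by positivity) (by positivity) two_ne_zero).mp hsq

theorem EuclideanSpace.sum_spectral_mul_eq_apply {ι m : Type*} [Fintype ι] [Fintype m]
    (ν : ι → ℝ) (B : ι → EuclideanSpace ℝ m) (v : EuclideanSpace ℝ m) (a : m) :
    ∑ x, (∑ j, ν j * B j a * B j x) * v x = (∑ j, (ν j * ⟪B j, v⟫_ℝ) • B j) a := by
  simp only [WithLp.ofLp_sum, WithLp.ofLp_smul, Finset.sum_apply, Pi.smul_apply, smul_eq_mul,
    PiLp.inner_apply, RCLike.inner_apply, conj_trivial, Finset.sum_mul, Finset.mul_sum]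
  rw [Finset.sum_comm]
  exact Finset.sum_congr rfl fun j _ => Finset.sum_congr rfl fun x _ => by ring

/-- approximate eigenvector of a symmetric matrix with spectral gap is close to
the true eigenvector: ⟨B'_i, v⟩² ≥ 1 − (ε/ν)², hence min(‖v−B'_i‖,‖v+B'_i‖) ≤ √2 ε/ν. -/
theorem stmt7 {n r : ℕ} (ε νmin : ℝ) (hνmin : 0 < νmin)
    (ν : Fin r → ℝ) (B' : Fin r → EuclideanSpace ℝ (Fin n)) (hB' : Orthonormal ℝ B')
    (M' : Matrix (Fin n) (Fin n) ℝ)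
    (hM' : ∀ a b, M' a b = ∑ i, ν i * B' i a * B' i b)
    (v : EuclideanSpace ℝ (Fin n)) (hv : ‖v‖ = 1) (i : Fin r)
    (hgap : ∀ j k : Fin r, j ≠ k → νmin ≤ |ν j - ν k|) (habs : ∀ j, νmin ≤ |ν j|)
    (w : EuclideanSpace ℝ (Fin n))
    (hw : ∀ a, w a = (∑ x, M' a x * v x) - ν i * v a)
    (hε : ‖w‖ ≤ ε) :
    1 - (ε / νmin) ^ 2 ≤ (inner ℝ (B' i) v : ℝ) ^ 2 ∧
    min ‖v - B' i‖ ‖v + B' i‖ ≤ Real.sqrt 2 * ε / νmin := by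
  have hw_eq : w = ∑ j, (ν j * ⟪B' j, v⟫_ℝ) • B' j - ν i • v := by
    ext a
    simp only [hw, hM', EuclideanSpace.sum_spectral_mul_eq_apply, PiLp.sub_apply,
      PiLp.smul_apply, smul_eq_mul]
  have hkey := hB'.sq_mul_norm_sq_sub_inner_sq_le hνmin.le i (fun j hj => hgap j i hj) (habs i) v
  rw [← hw_eq, hv, one_pow] at hkey
  have hε_sq : ‖w‖ ^ 2 ≤ ε ^ 2 := pow_le_pow_left₀ (norm_nonneg w) hε 2
  have hfirst : 1 - (ε / νmin) ^ 2 ≤ ⟪B' i, v⟫_ℝ ^ 2 := by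
    rw [div_pow, sub_le_comm, le_div_iff₀ (by positivity)]
    linarith
  refine ⟨hfirst, ?_⟩
  rw [mul_div_assoc]
  exact min_norm_sub_norm_add_le (hB'.norm_eq_one i) hv
    (div_nonneg ((norm_nonneg w).trans hε) hνmin.le) hfirst
end

section
/- (HTD approximation error bound) Let T be a symmetric p×p×p×p tensor, Mat(T) its p²×p² flattening with eigenvalues μ_1, ..., μ_q (decreasing magnitude, q = rank) and orthonormal eigenvectors v_1, ..., v_q. For i ≤ r, reshape v_i into a symmetric p×p matrix M_i with eigenvalues β_i^{(1)}, ..., β_i^{(r_i)} in decreasing magnitude and top unit eigenvector b_i; set β_i = β_i^{(1)}. Then the tensor T' = Σ_{i=1}^r μ_i β_i² b_i^{⊗4} satisfies ‖T' − T‖ ≤ (Σ_{i=r+1}^q μ_i²)^{1/2} + Σ_{i=1}^r |μ_i|(1 + |β_i|)(Σ_{j=2}^{r_i} (β_i^{(j)})²)^{1/2}. -/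
open scoped RealInnerProductSpace

noncomputable def outer {ι κ : Type*} (x : EuclideanSpace ℝ ι) (y : EuclideanSpace ℝ κ) :
    EuclideanSpace ℝ (ι × κ) := WithLp.toLp 2 (fun ab : ι × κ => x ab.1 * y ab.2)

lemma inner_outer {ι κ : Type*} [Fintype ι] [Fintype κ]
    (x x' : EuclideanSpace ℝ ι) (y y' : EuclideanSpace ℝ κ) :
    ⟪outer x y, outer x' y'⟫ = ⟪x, x'⟫ * ⟪y, y'⟫ := by
  simp only [PiLp.inner_apply, RCLike.inner_apply, starRingEnd_apply, star_trivial, outer]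
  rw [Fintype.sum_prod_type, Finset.sum_mul_sum]
  congr 1; funext a; congr 1; funext b; ring

lemma norm_outer {ι κ : Type*} [Fintype ι] [Fintype κ]
    (x : EuclideanSpace ℝ ι) (y : EuclideanSpace ℝ κ) :
    ‖outer x y‖ = ‖x‖ * ‖y‖ := by
  have h : ‖outer x y‖ ^ 2 = (‖x‖ * ‖y‖) ^ 2 := by
    rw [← real_inner_self_eq_norm_sq, inner_outer, real_inner_self_eq_norm_sq,
      real_inner_self_eq_norm_sq]; ring
  have := congrArg Real.sqrt h
  rwa [Real.sqrt_sq (norm_nonneg _), Real.sqrt_sq (by positivity)] at this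

lemma orthonormal_outer {ι : Type*} [Fintype ι] {κ : Type*} [Fintype κ]
    {v : ι → EuclideanSpace ℝ κ} (hv : Orthonormal ℝ v) :
    Orthonormal ℝ (fun i => outer (v i) (v i)) := by
  classical
  rw [orthonormal_iff_ite]
  intro i j
  rw [inner_outer, orthonormal_iff_ite.mp hv i j]
  by_cases h : i = j <;> simp [h]

lemma norm_sum_sq_orthonormal {E : Type*} [NormedAddCommGroup E] [InnerProductSpace ℝ E]
    {ι : Type*} {e : ι → E} (he : Orthonormal ℝ e) (s : Finset ι) (c : ι → ℝ) :
    ‖∑ i ∈ s, c i • e i‖ ^ 2 = ∑ i ∈ s, (c i) ^ 2 := by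
  classical
  rw [← real_inner_self_eq_norm_sq, sum_inner]
  simp only [inner_sum, real_inner_smul_left, real_inner_smul_right,
    orthonormal_iff_ite.mp he, mul_ite, mul_one, mul_zero]
  simp only [Finset.sum_ite_eq', Finset.sum_ite_eq]
  exact Finset.sum_congr rfl fun i hi => by simp [hi, sq]

lemma norm_sum_orthonormal {E : Type*} [NormedAddCommGroup E] [InnerProductSpace ℝ E]
    {ι : Type*} {e : ι → E} (he : Orthonormal ℝ e) (s : Finset ι) (c : ι → ℝ) :
    ‖∑ i ∈ s, c i • e i‖ = Real.sqrt (∑ i ∈ s, (c i) ^ 2) := by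
  rw [← norm_sum_sq_orthonormal he s c, Real.sqrt_sq (norm_nonneg _)]

lemma sum_split {q r : ℕ} (hrq : r ≤ q) {M : Type*} [AddCommMonoid M] (f : Fin q → M) :
    ∑ i, f i = (∑ i : Fin r, f (Fin.castLE hrq i)) +
      ∑ i ∈ Finset.univ.filter (fun i : Fin q => r ≤ (i : ℕ)), f i := by
  classical
  rw [← Finset.sum_filter_add_sum_filter_not Finset.univ (fun i : Fin q => (i : ℕ) < r)]
  congr 1
  · have himg : Finset.univ.filter (fun i : Fin q => (i : ℕ) < r)
        = Finset.univ.map (Fin.castLEEmb hrq) := by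
      ext a
      simp only [Finset.mem_map, Finset.mem_univ, true_and, Finset.mem_filter]
      constructor
      · intro h; exact ⟨⟨(a : ℕ), h⟩, rfl⟩
      · rintro ⟨b, rfl⟩; exact b.isLt
    rw [himg, Finset.sum_map]
    rfl
  · congr 1
    ext a
    simp [not_lt]

/-- the HTD approximation error bound
‖T' − T‖ ≤ (Σ_{i>r} μ_i²)^{1/2} + Σ_{i≤r} |μ_i|(1+|β_i|)(Σ_{j≥2}(β_i^{(j)})²)^{1/2}. -/
theorem stmt10 {p q r : ℕ} [NeZero p] (hrq : r ≤ q)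
    (T : Fin p → Fin p → Fin p → Fin p → ℝ)
    (hsym : ∀ i1 i2 i3 i4, T i1 i2 i3 i4 = T i2 i1 i3 i4 ∧
      T i1 i2 i3 i4 = T i1 i3 i2 i4 ∧ T i1 i2 i3 i4 = T i1 i2 i4 i3)
    (μ : Fin q → ℝ) (hμ : Antitone fun i => |μ i|) (hμ0 : ∀ i, μ i ≠ 0)
    (v : Fin q → EuclideanSpace ℝ (Fin p × Fin p)) (hv : Orthonormal ℝ v)
    (hT : ∀ i1 i2 j1 j2, T i1 i2 j1 j2 = ∑ i, μ i * v i (i1, i2) * v i (j1, j2))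
    (β : Fin r → Fin p → ℝ) (w : Fin r → Fin p → EuclideanSpace ℝ (Fin p))
    (hw : ∀ i, Orthonormal ℝ (w i))
    (hβ : ∀ i, Antitone fun j => |β i j|)
    (hreshape : ∀ (i : Fin r) (a c : Fin p),
      v (Fin.castLE hrq i) (a, c) = ∑ j, β i j * w i j a * w i j c)
    (T' : Fin p → Fin p → Fin p → Fin p → ℝ)
    (hT' : ∀ i1 i2 i3 i4, T' i1 i2 i3 i4 = ∑ i : Fin r,
      μ (Fin.castLE hrq i) * (β i 0) ^ 2 * (w i 0 i1 * w i 0 i2 * w i 0 i3 * w i 0 i4)) :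
    Real.sqrt (∑ i1, ∑ i2, ∑ i3, ∑ i4, (T' i1 i2 i3 i4 - T i1 i2 i3 i4) ^ 2) ≤
      Real.sqrt (∑ i ∈ Finset.univ.filter (fun i : Fin q => r ≤ (i : ℕ)), μ i ^ 2) +
      ∑ i : Fin r, |μ (Fin.castLE hrq i)| * (1 + |β i 0|) *
        Real.sqrt (∑ j ∈ Finset.univ.filter (fun j : Fin p => j ≠ 0), (β i j) ^ 2) := by
  classical
  set O : Fin q → EuclideanSpace ℝ ((Fin p × Fin p) × (Fin p × Fin p)) :=
    fun i => outer (v i) (v i) with hOdef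
  set W : Fin r → Fin p → EuclideanSpace ℝ (Fin p × Fin p) :=
    fun i j => outer (w i j) (w i j) with hWdef
  set u : Fin r → EuclideanSpace ℝ (Fin p × Fin p) := fun i => β i 0 • W i 0 with hudef
  set D : EuclideanSpace ℝ ((Fin p × Fin p) × (Fin p × Fin p)) :=
    WithLp.toLp 2 (fun x : (Fin p × Fin p) × (Fin p × Fin p) => T' x.1.1 x.1.2 x.2.1 x.2.2 - T x.1.1 x.1.2 x.2.1 x.2.2) with hDdef
  have hO : Orthonormal ℝ O := orthonormal_outer hv
  have hWo : ∀ i, Orthonormal ℝ (W i) := fun i => orthonormal_outer (hw i)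
  -- the reshaped eigenvector as a sum of rank-one matrices
  have hvsum : ∀ i : Fin r, v (Fin.castLE hrq i) = ∑ j, β i j • W i j := by
    intro i
    ext ac
    rw [show v (Fin.castLE hrq i) ac = ∑ j, β i j * w i j ac.1 * w i j ac.2 from hreshape i ac.1 ac.2]
    rw [WithLp.ofLp_sum, Finset.sum_apply]
    refine Finset.sum_congr rfl fun j _ => ?_
    show β i j * w i j ac.1 * w i j ac.2 = β i j * (w i j ac.1 * w i j ac.2)
    ring
  -- the decomposition of the difference tensor
  have hD : D = (∑ i : Fin r, μ (Fin.castLE hrq i) •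
        (outer (u i) (u i) - O (Fin.castLE hrq i)))
      - ∑ i ∈ Finset.univ.filter (fun i : Fin q => r ≤ (i : ℕ)), μ i • O i := by
    ext x
    obtain ⟨⟨a, b⟩, c, d⟩ := x
    show T' a b c d - T a b c d = _
    rw [hT' a b c d, hT a b c d, sum_split hrq (fun i => μ i * v i (a, b) * v i (c, d))]
    have : ((∑ i : Fin r, μ (Fin.castLE hrq i) •
          (outer (u i) (u i) - O (Fin.castLE hrq i)))
        - ∑ i ∈ Finset.univ.filter (fun i : Fin q => r ≤ (i : ℕ)), μ i • O i) ((a, b), (c, d))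
        = (∑ i : Fin r, μ (Fin.castLE hrq i) *
            ((u i (a, b)) * (u i (c, d)) - v (Fin.castLE hrq i) (a, b) * v (Fin.castLE hrq i) (c, d)))
        - ∑ i ∈ Finset.univ.filter (fun i : Fin q => r ≤ (i : ℕ)),
            μ i * (v i (a, b) * v i (c, d)) := by
      rw [PiLp.sub_apply, WithLp.ofLp_sum, Finset.sum_apply, WithLp.ofLp_sum, Finset.sum_apply]
      congr 1
    rw [this]
    have e1 : ∀ i : Fin r, μ (Fin.castLE hrq i) *
          ((u i (a, b)) * (u i (c, d)) - v (Fin.castLE hrq i) (a, b) * v (Fin.castLE hrq i) (c, d))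
        = μ (Fin.castLE hrq i) * (β i 0) ^ 2 * (w i 0 a * w i 0 b * w i 0 c * w i 0 d)
          - μ (Fin.castLE hrq i) * v (Fin.castLE hrq i) (a, b) * v (Fin.castLE hrq i) (c, d) := by
      intro i
      have h1 : u i (a, b) = β i 0 * (w i 0 a * w i 0 b) := rfl
      have h2 : u i (c, d) = β i 0 * (w i 0 c * w i 0 d) := rfl
      rw [h1, h2]; ring
    rw [Finset.sum_congr rfl fun i _ => e1 i, Finset.sum_sub_distrib,
      Finset.sum_congr rfl fun i (_ : i ∈ Finset.univ.filter fun i : Fin q => r ≤ (i : ℕ)) =>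
        (by ring : μ i * (v i (a, b) * v i (c, d)) = μ i * v i (a, b) * v i (c, d))]
    ring
  -- norm of D equals the LHS
  have hDnorm : Real.sqrt (∑ i1, ∑ i2, ∑ i3, ∑ i4, (T' i1 i2 i3 i4 - T i1 i2 i3 i4) ^ 2) = ‖D‖ := by
    rw [EuclideanSpace.norm_eq]
    congr 1
    simp only [Fintype.sum_prod_type, Real.norm_eq_abs, sq_abs, hDdef, PiLp.toLp_apply]
  -- norm of the tail term
  have htail : ‖∑ i ∈ Finset.univ.filter (fun i : Fin q => r ≤ (i : ℕ)), μ i • O i‖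
      = Real.sqrt (∑ i ∈ Finset.univ.filter (fun i : Fin q => r ≤ (i : ℕ)), μ i ^ 2) :=
    norm_sum_orthonormal hO _ μ
  -- per-term bound
  have hterm : ∀ i : Fin r,
      ‖μ (Fin.castLE hrq i) • (outer (u i) (u i) - O (Fin.castLE hrq i))‖
        ≤ |μ (Fin.castLE hrq i)| * (1 + |β i 0|) *
          Real.sqrt (∑ j ∈ Finset.univ.filter (fun j : Fin p => j ≠ 0), (β i j) ^ 2) := by
    intro i
    rw [norm_smul, Real.norm_eq_abs]
    have hsplit : outer (u i) (u i) - O (Fin.castLE hrq i)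
        = outer (u i) (u i - v (Fin.castLE hrq i))
          + outer (u i - v (Fin.castLE hrq i)) (v (Fin.castLE hrq i)) := by
      ext x
      show u i x.1 * u i x.2 - v (Fin.castLE hrq i) x.1 * v (Fin.castLE hrq i) x.2
        = u i x.1 * (u i x.2 - v (Fin.castLE hrq i) x.2)
          + (u i x.1 - v (Fin.castLE hrq i) x.1) * v (Fin.castLE hrq i) x.2
      ring
    have hudiff : ‖u i - v (Fin.castLE hrq i)‖
        = Real.sqrt (∑ j ∈ Finset.univ.filter (fun j : Fin p => j ≠ 0), (β i j) ^ 2) := by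
      have hsum0 : u i - v (Fin.castLE hrq i)
          = - ∑ j ∈ Finset.univ.filter (fun j : Fin p => j ≠ 0), β i j • W i j := by
        rw [hvsum i, ← Finset.sum_filter_add_sum_filter_not Finset.univ
          (fun j : Fin p => j = 0) (fun j => β i j • W i j)]
        have h0 : Finset.univ.filter (fun j : Fin p => j = 0) = {0} := by
          ext j; simp
        rw [h0, Finset.sum_singleton]
        have : Finset.univ.filter (fun j : Fin p => ¬ j = 0)
            = Finset.univ.filter (fun j : Fin p => j ≠ 0) := rfl
        rw [this]
        abel
      rw [hsum0, norm_neg, norm_sum_orthonormal (hWo i)]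
    have hun : ‖u i‖ = |β i 0| := by
      rw [hudef]
      simp only [norm_smul, Real.norm_eq_abs]
      rw [hWdef]
      simp only [norm_outer, (hw i).1 0]
      ring
    have hvn : ‖v (Fin.castLE hrq i)‖ = 1 := hv.1 _
    have key : ‖outer (u i) (u i) - O (Fin.castLE hrq i)‖
        ≤ (1 + |β i 0|) *
          Real.sqrt (∑ j ∈ Finset.univ.filter (fun j : Fin p => j ≠ 0), (β i j) ^ 2) := by
      calc ‖outer (u i) (u i) - O (Fin.castLE hrq i)‖
          ≤ ‖outer (u i) (u i - v (Fin.castLE hrq i))‖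
            + ‖outer (u i - v (Fin.castLE hrq i)) (v (Fin.castLE hrq i))‖ := by
            rw [hsplit]; exact norm_add_le _ _
        _ = (|β i 0| + 1) * ‖u i - v (Fin.castLE hrq i)‖ := by
            rw [norm_outer, norm_outer, hun, hvn]; ring
        _ = (1 + |β i 0|) *
            Real.sqrt (∑ j ∈ Finset.univ.filter (fun j : Fin p => j ≠ 0), (β i j) ^ 2) := by
            rw [hudiff]; ring
    calc |μ (Fin.castLE hrq i)| * ‖outer (u i) (u i) - O (Fin.castLE hrq i)‖
        ≤ |μ (Fin.castLE hrq i)| * ((1 + |β i 0|) *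
          Real.sqrt (∑ j ∈ Finset.univ.filter (fun j : Fin p => j ≠ 0), (β i j) ^ 2)) :=
          mul_le_mul_of_nonneg_left key (abs_nonneg _)
      _ = _ := by ring
  -- assemble
  rw [hDnorm, hD]
  calc ‖(∑ i : Fin r, μ (Fin.castLE hrq i) • (outer (u i) (u i) - O (Fin.castLE hrq i)))
        - ∑ i ∈ Finset.univ.filter (fun i : Fin q => r ≤ (i : ℕ)), μ i • O i‖
      ≤ ‖∑ i : Fin r, μ (Fin.castLE hrq i) • (outer (u i) (u i) - O (Fin.castLE hrq i))‖
        + ‖∑ i ∈ Finset.univ.filter (fun i : Fin q => r ≤ (i : ℕ)), μ i • O i‖ :=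
      norm_sub_le _ _
    _ ≤ (∑ i : Fin r, ‖μ (Fin.castLE hrq i) • (outer (u i) (u i) - O (Fin.castLE hrq i))‖)
        + Real.sqrt (∑ i ∈ Finset.univ.filter (fun i : Fin q => r ≤ (i : ℕ)), μ i ^ 2) := by
      rw [htail]
      exact add_le_add_left (norm_sum_le _ _) _
    _ ≤ (∑ i : Fin r, |μ (Fin.castLE hrq i)| * (1 + |β i 0|) *
          Real.sqrt (∑ j ∈ Finset.univ.filter (fun j : Fin p => j ≠ 0), (β i j) ^ 2))
        + Real.sqrt (∑ i ∈ Finset.univ.filter (fun i : Fin q => r ≤ (i : ℕ)), μ i ^ 2) :=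
      add_le_add_left (Finset.sum_le_sum fun i _ => hterm i) _
    _ = _ := by ring
end

section
/- Let a_1, ..., a_r, b_1, ..., b_ℓ be vectors in R^p such that the symmetric matrices a_1 a_1^T, ..., a_r a_r^T, b_1 b_1^T, ..., b_ℓ b_ℓ^T are linearly independent (which requires r + ℓ ≤ p(p+1)/2). Let M = Σ_{i=1}^r λ_i' A_i A_i^T + Σ_{j=1}^ℓ ν_j B_j B_j^T ∈ R^{p²×p²}, where A_i = vec(a_i a_i^T), B_j = vec(b_j b_j^T), and all coefficients λ_i', ν_j are nonzero. Then for each i, the coefficient λ_i' is the unique scalar c such that rank(M − c A_i A_i^T) = rank(M) − 1. -/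
open Matrix Finset Module

/-- finrank of range is preserved by postcomposition with an injective map. -/
lemma finrank_range_comp_of_inj {M₁ M₂ M₃ : Type*} [AddCommGroup M₁] [Module ℝ M₁]
    [AddCommGroup M₂] [Module ℝ M₂] [AddCommGroup M₃] [Module ℝ M₃]
    (f : M₂ →ₗ[ℝ] M₃) (hf : Function.Injective f) (g : M₁ →ₗ[ℝ] M₂) :
    finrank ℝ (LinearMap.range (f ∘ₗ g)) = finrank ℝ (LinearMap.range g) := by
  rw [LinearMap.range_comp]
  exact ((Submodule.equivMapOfInjective f hf _).finrank_eq).symm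

lemma rank_weighted_gram {N ι : Type*} [Fintype N] [Fintype ι] [DecidableEq N] [DecidableEq ι]
    (v : ι → N → ℝ) (hv : LinearIndependent ℝ v) (d : ι → ℝ) (hd : ∀ k, d k ≠ 0) :
    (Matrix.of fun x y => ∑ k, d k * v k x * v k y : Matrix N N ℝ).rank = Fintype.card ι := by
  classical
  set W : Matrix ι N ℝ := Matrix.of fun k x => v k x with hW
  have hG : (Matrix.of fun x y => ∑ k, d k * v k x * v k y : Matrix N N ℝ)
      = Wᵀ * (Matrix.diagonal d * W) := by
    ext x y
    simp only [Matrix.of_apply, Matrix.mul_apply, Matrix.diagonal_apply, Matrix.transpose_apply,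
      hW, ite_mul, zero_mul, Finset.sum_ite_eq, Finset.mem_univ, if_true]
    exact Finset.sum_congr rfl fun k _ => by ring
  have hWinj : Function.Injective (Wᵀ.mulVecLin) := by
    rw [Matrix.coe_mulVecLin, Matrix.mulVec_injective_iff]
    simpa [hW] using hv
  have hDinj : Function.Injective ((Matrix.diagonal d).mulVecLin) := by
    rw [Matrix.coe_mulVecLin]
    apply Matrix.mulVec_injective_iff_isUnit.mpr
    rw [Matrix.isUnit_iff_isUnit_det, Matrix.det_diagonal]
    exact (Finset.prod_ne_zero_iff.mpr fun k _ => hd k).isUnit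
  rw [hG, Matrix.rank, Matrix.mulVecLin_mul, Matrix.mulVecLin_mul,
    finrank_range_comp_of_inj _ hWinj, finrank_range_comp_of_inj _ hDinj]
  have : finrank ℝ (LinearMap.range W.mulVecLin) = W.rank := rfl
  rw [this]
  exact hv.rank_matrix

lemma rank_weighted_gram' {N ι : Type*} [Fintype N] [Fintype ι] [DecidableEq N] [DecidableEq ι]
    (v : ι → N → ℝ) (hv : LinearIndependent ℝ v) (d : ι → ℝ) :
    (Matrix.of fun x y => ∑ k, d k * v k x * v k y : Matrix N N ℝ).rank
      = (Finset.univ.filter fun k => d k ≠ 0).card := by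
  classical
  have hEq : (Matrix.of fun x y => ∑ k, d k * v k x * v k y : Matrix N N ℝ)
      = Matrix.of fun x y => ∑ k : {k // d k ≠ 0}, d k.1 * v k.1 x * v k.1 y := by
    ext x y
    simp only [Matrix.of_apply]
    rw [← Finset.sum_filter_of_ne (p := fun k => d k ≠ 0) (fun k _ h hk => h (by simp [hk])),
      Finset.sum_subtype (p := fun k => d k ≠ 0) _ (fun k => by simp) (fun k => d k * v k x * v k y)]
  rw [hEq]
  have := rank_weighted_gram (ι := {k // d k ≠ 0}) (fun k => v k.1)
    (hv.comp _ Subtype.val_injective) (fun k => d k.1) (fun k => k.2)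
  rw [this, Fintype.card_subtype]

lemma sum_update_mul {ι : Type*} [Fintype ι] [DecidableEq ι] (f g : ι → ℝ) (i : ι) (b : ℝ) :
    ∑ k, Function.update f i b k * g k = (∑ k, f k * g k) - f i * g i + b * g i := by
  have h1 : ∀ k, Function.update f i b k * g k
      = Function.update (fun k => f k * g k) i (b * g i) k := by
    intro k
    rcases eq_or_ne k i with h | h
    · subst h; simp
    · simp [Function.update_of_ne h]
  simp_rw [h1]
  rw [Finset.sum_update_of_mem (Finset.mem_univ i), ← Finset.erase_eq,
    Finset.sum_erase_eq_sub (Finset.mem_univ i)]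
  ring

lemma li_uncurry {p : ℕ} {ι : Type*} (f : ι → Matrix (Fin p) (Fin p) ℝ)
    (hf : LinearIndependent ℝ f) :
    LinearIndependent ℝ (fun k => fun x : Fin p × Fin p => f k x.1 x.2) := by
  let U : Matrix (Fin p) (Fin p) ℝ →ₗ[ℝ] ((Fin p × Fin p) → ℝ) :=
    { toFun := fun m x => m x.1 x.2
      map_add' := fun _ _ => rfl
      map_smul' := fun _ _ => rfl }
  have hU : LinearMap.ker U = ⊥ := by
    rw [LinearMap.ker_eq_bot]
    intro m₁ m₂ h
    ext x y
    exact congrFun h (x, y)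
  exact hf.map' U hU

/-- with linearly independent symmetric matrices a_i a_iᵀ, b_j b_jᵀ and nonzero
coefficients, each λ'_i is the unique scalar c with rank(M − c A_i A_iᵀ) = rank(M) − 1. -/
theorem stmt13 {p r ℓ : ℕ}
    (a : Fin r → EuclideanSpace ℝ (Fin p)) (b : Fin ℓ → EuclideanSpace ℝ (Fin p))
    (hindep : LinearIndependent ℝ (Sum.elim
      (fun i => (Matrix.of fun x y => a i x * a i y : Matrix (Fin p) (Fin p) ℝ))
      (fun j => (Matrix.of fun x y => b j x * b j y : Matrix (Fin p) (Fin p) ℝ))))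
    (lam : Fin r → ℝ) (ν : Fin ℓ → ℝ) (hlam : ∀ i, lam i ≠ 0) (hν : ∀ j, ν j ≠ 0)
    (A : Fin r → (Fin p × Fin p) → ℝ) (hA : ∀ i x, A i x = a i x.1 * a i x.2)
    (B : Fin ℓ → (Fin p × Fin p) → ℝ) (hB : ∀ j x, B j x = b j x.1 * b j x.2)
    (M : Matrix (Fin p × Fin p) (Fin p × Fin p) ℝ)
    (hM : ∀ x y, M x y = (∑ i, lam i * A i x * A i y) + ∑ j, ν j * B j x * B j y) :
    ∀ i, ((M - Matrix.of fun x y => lam i * A i x * A i y).rank = M.rank - 1) ∧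
      ∀ c : ℝ, (M - Matrix.of fun x y => c * A i x * A i y).rank = M.rank - 1 →
        c = lam i := by
  classical
  intro i
  set w : Fin r ⊕ Fin ℓ → (Fin p × Fin p) → ℝ := Sum.elim A B with hw_def
  have hw : LinearIndependent ℝ w := by
    have h := li_uncurry _ hindep
    have he : w = fun k => fun x : Fin p × Fin p =>
        (Sum.elim (fun i => (Matrix.of fun x y => a i x * a i y : Matrix (Fin p) (Fin p) ℝ))
          (fun j => (Matrix.of fun x y => b j x * b j y : Matrix (Fin p) (Fin p) ℝ)) k) x.1 x.2 := by
      funext k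
      cases k with
      | inl i' => funext x; simp [hw_def, hA]
      | inr j => funext x; simp [hw_def, hB]
    rw [he]; exact h
  have hMg : M = Matrix.of fun x y => ∑ k, (Sum.elim lam ν) k * w k x * w k y := by
    ext x y
    simp only [Matrix.of_apply]
    rw [hM, Fintype.sum_sum_type]
    simp [hw_def]
  have hdM : ∀ k, Sum.elim lam ν k ≠ 0 := by rintro (i' | j); exacts [hlam i', hν j]
  have hMrank : M.rank = r + ℓ := by
    rw [hMg, rank_weighted_gram _ hw _ hdM, Fintype.card_sum, Fintype.card_fin, Fintype.card_fin]
  have key : ∀ t : ℝ, (M - Matrix.of fun x y => t * A i x * A i y)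
      = Matrix.of fun x y =>
        ∑ k, (Sum.elim (Function.update lam i (lam i - t)) ν) k * w k x * w k y := by
    intro t
    ext x y
    rw [Matrix.sub_apply, Matrix.of_apply, Matrix.of_apply, hM, Fintype.sum_sum_type]
    simp only [Sum.elim_inl, Sum.elim_inr, hw_def]
    simp_rw [mul_assoc]
    rw [sum_update_mul lam (fun i' => A i' x * A i' y) i (lam i - t)]
    ring
  constructor
  · rw [key (lam i), hMrank, sub_self,
      rank_weighted_gram' w hw (Sum.elim (Function.update lam i 0) ν)]
    have hfil : (Finset.univ.filter fun k => Sum.elim (Function.update lam i 0) ν k ≠ 0)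
        = Finset.univ.erase (Sum.inl i) := by
      ext k
      cases k with
      | inl i' =>
        rcases eq_or_ne i' i with h | h
        · subst h; simp only [Finset.mem_filter, Finset.mem_univ, true_and, Finset.mem_erase, Sum.elim_inl, Function.update_self, ne_eq, not_true_eq_false, false_and]
        · simp only [Finset.mem_filter, Finset.mem_univ, true_and, Finset.mem_erase, Sum.elim_inl, Function.update_of_ne h, ne_eq, Sum.inl.injEq, h, hlam i', not_false_eq_true, and_true]
      | inr j => simp only [Finset.mem_filter, Finset.mem_univ, true_and, Finset.mem_erase, Sum.elim_inr, ne_eq, reduceCtorEq, hν j, not_false_eq_true, and_true]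
    rw [hfil, Finset.card_erase_of_mem (Finset.mem_univ _), Finset.card_univ,
      Fintype.card_sum, Fintype.card_fin, Fintype.card_fin]
  · intro c hc
    by_contra hne
    rw [key c, hMrank] at hc
    have hd' : ∀ k, Sum.elim (Function.update lam i (lam i - c)) ν k ≠ 0 := by
      rintro (i' | j)
      · rcases eq_or_ne i' i with h | h
        · subst h; simpa using sub_ne_zero.mpr (Ne.symm hne)
        · simpa [Function.update_of_ne h] using hlam i'
      · exact hν j
    rw [rank_weighted_gram _ hw _ hd', Fintype.card_sum, Fintype.card_fin,
      Fintype.card_fin] at hc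
    have hr : 0 < r := i.pos
    omega
end

section
/- (Uniqueness of the proportionality constant in proportional cICA) Let M_y = Σ_{i=1}^r λ_i A_i A_i^T and M_x = γ⁴ M_y + Σ_{j=1}^ℓ ν_j B_j B_j^T be symmetric p² × p² matrices, where A_i = vec(a_i a_i^T), B_j = vec(b_j b_j^T), the combined set {A_1,...,A_r,B_1,...,B_ℓ} is linearly independent, all λ_i, ν_j are nonzero, and γ > 0. Let M_x = V D V^T be the thin eigendecomposition of M_x (V ∈ R^{p²×(r+ℓ)} with orthonormal columns, D invertible diagonal), and let A ∈ R^{p²×r} have columns A_i. Then γ⁴ Diag(λ_1, ..., λ_r) = (A^T V D^{-1} V^T A)^{-1}; in particular, γ is uniquely determined by M_x, M_y and equals ((1/λ_i)(A_i^T V D^{-1} V^T A_i)^{-1})^{1/4} for any i, where this quantity is the same for all i. -/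
open Matrix

/-- uniqueness of the proportionality constant γ in proportional cICA:
γ⁴ Diag(λ) = (Aᵀ V D⁻¹ Vᵀ A)⁻¹, so γ = ((1/λ_i)(A_iᵀ V D⁻¹ Vᵀ A_i)⁻¹)^{1/4} for every i. -/
theorem stmt14 {p r ℓ : ℕ}
    (a : Fin r → EuclideanSpace ℝ (Fin p)) (b : Fin ℓ → EuclideanSpace ℝ (Fin p))
    (A : Matrix (Fin p × Fin p) (Fin r) ℝ) (hA : ∀ x i, A x i = a i x.1 * a i x.2)
    (Bv : Fin ℓ → (Fin p × Fin p) → ℝ) (hBv : ∀ j x, Bv j x = b j x.1 * b j x.2)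
    (hindep : LinearIndependent ℝ (Sum.elim (fun i => fun x => A x i) Bv))
    (lam : Fin r → ℝ) (ν : Fin ℓ → ℝ) (hlam : ∀ i, lam i ≠ 0) (hν : ∀ j, ν j ≠ 0)
    (γ : ℝ) (hγ : 0 < γ)
    (My Mx : Matrix (Fin p × Fin p) (Fin p × Fin p) ℝ)
    (hMy : ∀ x y, My x y = ∑ i, lam i * A x i * A y i)
    (hMx : Mx = γ ^ 4 • My + Matrix.of fun x y => ∑ j, ν j * Bv j x * Bv j y)
    (V : Matrix (Fin p × Fin p) (Fin (r + ℓ)) ℝ) (hV : Vᵀ * V = 1)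
    (d : Fin (r + ℓ) → ℝ) (hd : ∀ i, d i ≠ 0)
    (D : Matrix (Fin (r + ℓ)) (Fin (r + ℓ)) ℝ) (hD : D = Matrix.diagonal d)
    (hthin : Mx = V * D * Vᵀ) :
    γ ^ 4 • Matrix.diagonal lam = (Aᵀ * V * D⁻¹ * Vᵀ * A)⁻¹ ∧
    ∀ i, γ = ((1 / lam i) * ((Aᵀ * V * D⁻¹ * Vᵀ * A) i i)⁻¹) ^ ((1 : ℝ) / 4) := by
  classical
  set F : Fin r ⊕ Fin ℓ → (Fin p × Fin p) → ℝ := Sum.elim (fun i => fun x => A x i) Bv with hF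
  set F' : Fin (r + ℓ) → (Fin p × Fin p) → ℝ := fun k => F (finSumFinEquiv.symm k) with hF'
  set C : Matrix (Fin p × Fin p) (Fin (r + ℓ)) ℝ := Matrix.of fun x k => F' k x with hC
  set e : Fin (r + ℓ) → ℝ :=
    fun k => Sum.elim (fun i => γ ^ 4 * lam i) ν (finSumFinEquiv.symm k) with he
  have hγ4 : (γ : ℝ) ^ 4 ≠ 0 := pow_ne_zero _ (ne_of_gt hγ)
  have hene : ∀ k, e k ≠ 0 := by
    intro k
    rcases h : finSumFinEquiv.symm k with i | j
    · simpa [he, h] using mul_ne_zero hγ4 (hlam i)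
    · simpa [he, h] using hν j
  have hFindep : LinearIndependent ℝ F' :=
    hindep.comp _ finSumFinEquiv.symm.injective
  -- Mx = C E Cᵀ
  have hMxC : Mx = C * Matrix.diagonal e * Cᵀ := by
    ext x y
    have hR : (C * Matrix.diagonal e * Cᵀ) x y
        = ∑ s : Fin r ⊕ Fin ℓ,
            F s x * Sum.elim (fun i => γ ^ 4 * lam i) ν s * F s y := by
      rw [Matrix.mul_apply]
      simp only [Matrix.mul_diagonal, Matrix.transpose_apply]
      rw [← Equiv.sum_comp finSumFinEquiv
        (fun k => C x k * e k * C y k)]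
      refine Finset.sum_congr rfl fun s _ => ?_
      simp [hC, hF', he]
    rw [hR, hMx]
    simp only [Matrix.add_apply, Matrix.smul_apply, Matrix.of_apply, smul_eq_mul, hMy,
      Finset.mul_sum, Fintype.sum_sum_type, Sum.elim_inl, Sum.elim_inr, hF]
    congr 1
    · exact Finset.sum_congr rfl fun _ _ => by ring
    · exact Finset.sum_congr rfl fun _ _ => by ring
  -- cancellation
  have hcancel : ∀ X : Matrix (Fin p × Fin p) (Fin (r + ℓ)) ℝ, X * Cᵀ = 0 → X = 0 := by
    intro X h
    ext x k
    have h0 : ∑ k, X x k • F' k = 0 := by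
      funext y
      have h1 := congrFun (congrFun h x) y
      simpa [Matrix.mul_apply, hC, Finset.sum_apply] using h1
    exact Fintype.linearIndependent_iff.mp hFindep (fun k => X x k) h0 k
  -- invertibility of D and E
  have hDright : D * Matrix.diagonal (fun i => (d i)⁻¹) = 1 := by
    rw [hD, Matrix.diagonal_mul_diagonal]
    convert Matrix.diagonal_one using 2
    exact funext fun i => mul_inv_cancel₀ (hd i)
  haveI : Invertible D := invertibleOfRightInverse _ _ hDright
  have hEright : Matrix.diagonal e * Matrix.diagonal (fun k => (e k)⁻¹) = 1 := by
    rw [Matrix.diagonal_mul_diagonal]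
    convert Matrix.diagonal_one using 2
    exact funext fun k => mul_inv_cancel₀ (hene k)
  haveI : Invertible (Matrix.diagonal e) := invertibleOfRightInverse _ _ hEright
  have hEinv : (Matrix.diagonal e)⁻¹ = Matrix.diagonal fun k => (e k)⁻¹ :=
    Matrix.inv_eq_right_inv hEright
  -- W
  set W : Matrix (Fin (r + ℓ)) (Fin (r + ℓ)) ℝ := Vᵀ * C with hW
  have hWT : Wᵀ = Cᵀ * V := by rw [hW, Matrix.transpose_mul, Matrix.transpose_transpose]
  have hVMV : Vᵀ * Mx * V = D := by
    rw [hthin]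
    calc Vᵀ * (V * D * Vᵀ) * V = Vᵀ * V * D * (Vᵀ * V) := by simp only [Matrix.mul_assoc]
      _ = D := by rw [hV, Matrix.one_mul, Matrix.mul_one]
  have hWEW : W * Matrix.diagonal e * Wᵀ = D := by
    rw [hW, hWT, ← hVMV, hMxC]
    simp only [Matrix.mul_assoc]
  haveI : Invertible W := invertibleOfRightInverse _
    (Matrix.diagonal e * Wᵀ * D⁻¹) (by
      calc W * (Matrix.diagonal e * Wᵀ * D⁻¹)
          = W * Matrix.diagonal e * Wᵀ * D⁻¹ := by simp only [Matrix.mul_assoc]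
        _ = 1 := by rw [hWEW, Matrix.mul_inv_of_invertible])
  haveI : Invertible Wᵀ := Matrix.invertibleTranspose W
  -- C = V W
  have hVVM : V * Vᵀ * Mx = Mx := by
    rw [hthin]
    calc V * Vᵀ * (V * D * Vᵀ) = V * (Vᵀ * V * (D * Vᵀ)) := by simp only [Matrix.mul_assoc]
      _ = V * D * Vᵀ := by rw [hV, Matrix.one_mul, Matrix.mul_assoc]
  have h2 : (V * W - C) * Matrix.diagonal e * Cᵀ = 0 := by
    have h1 : V * Vᵀ * (C * Matrix.diagonal e * Cᵀ) = C * Matrix.diagonal e * Cᵀ := by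
      rw [← hMxC]; exact hVVM
    calc (V * W - C) * Matrix.diagonal e * Cᵀ
        = V * Vᵀ * (C * Matrix.diagonal e * Cᵀ) - C * Matrix.diagonal e * Cᵀ := by
          rw [hW]; simp only [Matrix.sub_mul, Matrix.mul_assoc]
      _ = 0 := by rw [h1, sub_self]
  have h3 : (V * W - C) * Matrix.diagonal e = 0 := hcancel _ h2
  have hCV : C = V * W := by
    have h4 : V * W - C = 0 := by
      calc V * W - C
          = (V * W - C) * (Matrix.diagonal e * (Matrix.diagonal e)⁻¹) := by
            rw [Matrix.mul_inv_of_invertible, Matrix.mul_one]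
        _ = (V * W - C) * Matrix.diagonal e * (Matrix.diagonal e)⁻¹ := by
            rw [Matrix.mul_assoc]
        _ = 0 := by rw [h3, Matrix.zero_mul]
    exact (sub_eq_zero.mp h4).symm
  -- Wᵀ D⁻¹ W = E⁻¹
  have hWDW : Wᵀ * D⁻¹ * W = (Matrix.diagonal e)⁻¹ := by
    rw [← hWEW, Matrix.mul_inv_rev, Matrix.mul_inv_rev]
    calc Wᵀ * (Wᵀ⁻¹ * ((Matrix.diagonal e)⁻¹ * W⁻¹)) * W
        = Wᵀ * Wᵀ⁻¹ * (Matrix.diagonal e)⁻¹ * (W⁻¹ * W) := by simp only [Matrix.mul_assoc]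
      _ = (Matrix.diagonal e)⁻¹ := by
          rw [Matrix.mul_inv_of_invertible, Matrix.inv_mul_of_invertible,
            Matrix.one_mul, Matrix.mul_one]
  have hCDC : Cᵀ * V * D⁻¹ * Vᵀ * C = (Matrix.diagonal e)⁻¹ := by
    rw [← hWDW, hCV, Matrix.transpose_mul]
    calc Wᵀ * Vᵀ * V * D⁻¹ * Vᵀ * (V * W)
        = Wᵀ * ((Vᵀ * V) * (D⁻¹ * ((Vᵀ * V) * W))) := by simp only [Matrix.mul_assoc]
      _ = Wᵀ * D⁻¹ * W := by rw [hV, Matrix.one_mul, Matrix.one_mul, Matrix.mul_assoc]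
  -- extract the A block
  set ι : Fin r → Fin (r + ℓ) := fun i => finSumFinEquiv (Sum.inl i) with hι
  have hιinj : Function.Injective ι :=
    finSumFinEquiv.injective.comp Sum.inl_injective
  have hAC : A = C.submatrix id ι := by
    ext x i
    simp [hC, hF', hF, hι]
  have hG : Aᵀ * V * D⁻¹ * Vᵀ * A = Matrix.diagonal fun i => (γ ^ 4 * lam i)⁻¹ := by
    have hsub : (Cᵀ * V * D⁻¹ * Vᵀ * C).submatrix ι ι
        = Cᵀ.submatrix ι id * V * D⁻¹ * Vᵀ * C.submatrix id ι := by
      rw [Matrix.submatrix_mul _ _ ι id ι Function.bijective_id,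
        Matrix.submatrix_mul _ _ ι id id Function.bijective_id,
        Matrix.submatrix_mul _ _ ι id id Function.bijective_id,
        Matrix.submatrix_mul _ _ ι id id Function.bijective_id,
        Matrix.submatrix_id_id, Matrix.submatrix_id_id, Matrix.submatrix_id_id]
    have hAT : Aᵀ = Cᵀ.submatrix ι id := by
      rw [hAC, Matrix.transpose_submatrix]
    rw [hAT, hAC, ← hsub]
    rw [hCDC, hEinv, Matrix.submatrix_diagonal _ ι hιinj]
    refine congrArg Matrix.diagonal (funext fun i => ?_)
    simp only [Function.comp_apply, he, hι]
    simp
  refine ⟨?_, ?_⟩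
  · have hGinv : (Matrix.diagonal fun i => (γ ^ 4 * lam i)⁻¹)⁻¹
        = Matrix.diagonal fun i => γ ^ 4 * lam i := by
      apply Matrix.inv_eq_right_inv
      rw [Matrix.diagonal_mul_diagonal]
      convert Matrix.diagonal_one using 2
      exact funext fun i => inv_mul_cancel₀ (mul_ne_zero hγ4 (hlam i))
    rw [hG, hGinv]
    ext i j
    by_cases h : i = j <;> simp [Matrix.diagonal_apply, h]
  · intro i
    rw [hG, Matrix.diagonal_apply_eq, inv_inv]
    have h5 : 1 / lam i * (γ ^ 4 * lam i) = γ ^ 4 := by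
      field_simp
      exact div_self (hlam i)
    rw [h5]
    rw [show (γ : ℝ) ^ 4 = γ ^ ((4 : ℕ) : ℝ) from (Real.rpow_natCast γ 4).symm,
      ← Real.rpow_mul hγ.le]
    norm_num
end

section
/- Let b_1, ..., b_r be unit vectors in R^p with |⟨b_i, b_j⟩| ≤ ε for i ≠ j, let B_i = vec(b_i b_i^T) ∈ R^{p²}, and let ν_1, ..., ν_r be reals. Then there exist orthonormal vectors B_1', ..., B_r' ∈ R^{p²} such that ‖B_i' − B_i‖ ≤ (2^i − 2) ε² for each i, and the matrices M = Σ_i ν_i B_i B_i^T and M' = Σ_i ν_i B_i' (B_i')^T satisfy ‖M − M'‖_F ≤ (Σ_{i=1}^r |ν_i| (2^{i+1} − 4)) ε². -/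
open Finset InnerProductSpace

private lemma numeric_aux : ∀ m : ℕ,
    2 * ∑ k ∈ Finset.range m, ((2:ℝ)^(k+1) - 1)^2 ≤ ((2:ℝ)^(m+1) - 2)^2 := by
  intro m
  induction m with
  | zero => norm_num
  | succ n ih =>
    rw [Finset.sum_range_succ]
    have h2 : (2:ℝ) ≤ 2^(n+1) := by
      calc (2:ℝ) = 2^1 := by norm_num
      _ ≤ 2^(n+1) := by

        exact pow_le_pow_right₀ (by norm_num) (by omega)
    have hp : (2:ℝ)^(n+1+1) = 2 * 2^(n+1) := by ring
    rw [hp]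
    nlinarith [ih, h2]

private lemma fin_sum_Iio_eq {r : ℕ} (i : Fin r) (F : ℕ → ℝ) :
    ∑ j ∈ Finset.Iio i, F (j : ℕ) = ∑ k ∈ Finset.range (i : ℕ), F k := by
  apply Finset.sum_bij' (fun (j : Fin r) (_ : j ∈ Finset.Iio i) => (j : ℕ))
      (fun (k : ℕ) (hk : k ∈ Finset.range (i : ℕ)) =>
        (⟨k, lt_trans (Finset.mem_range.mp hk) i.isLt⟩ : Fin r)) <;>
    intro a ha <;>
    first
      | rfl
      | (simp only [Finset.mem_Iio, Finset.mem_range, Fin.lt_def, Fin.mk_lt_mk] at ha ⊢; omega)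

private lemma gs_dist_bound {E : Type*} [NormedAddCommGroup E] [InnerProductSpace ℝ E] {r : ℕ}
    [WellFoundedLT (Fin r)] (f : Fin r → E) (hli : LinearIndependent ℝ f) (hn : ∀ i, ‖f i‖ = 1)
    {δ : ℝ} (hδ : 0 ≤ δ) (hip : ∀ i j, i ≠ j → |(inner ℝ (f i) (f j) : ℝ)| ≤ δ) :
    ∀ i : Fin r, ‖gramSchmidtNormed ℝ f i - f i‖ ≤ ((2:ℝ) ^ ((i:ℕ) + 1) - 2) * δ := by
  haveI : WellFoundedLT (Fin r) := inferInstance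
  set g := gramSchmidtNormed ℝ f with hg
  have hON : Orthonormal ℝ g := gramSchmidtNormed_orthonormal hli
  intro i
  induction i using WellFoundedLT.induction with
  | _ i IH =>
  set u := gramSchmidt ℝ f i with hu
  have hu0 : u ≠ 0 := gramSchmidt_ne_zero i hli
  have hupos : 0 < ‖u‖ := norm_pos_iff.mpr hu0
  have hgi : g i = ‖u‖⁻¹ • u := rfl
  set c : Fin r → ℝ := fun j => inner ℝ (g j) (f i) with hc
  set w : E := ∑ j ∈ Finset.Iio i, c j • g j with hw
  -- decomposition f i = u + w
  have hdec : f i = u + w := by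
    rw [hw]
    have := gramSchmidt_def'' ℝ f i
    rw [this]
    congr 1
    apply Finset.sum_congr rfl
    intro j _
    have huj0 : gramSchmidt ℝ f j ≠ 0 := gramSchmidt_ne_zero j hli
    have hne : ‖gramSchmidt ℝ f j‖ ≠ 0 := norm_ne_zero_iff.mpr huj0
    have hgj : g j = ‖gramSchmidt ℝ f j‖⁻¹ • gramSchmidt ℝ f j := rfl
    have hinner : c j = ‖gramSchmidt ℝ f j‖⁻¹ * inner ℝ (gramSchmidt ℝ f j) (f i) := by
      show (inner ℝ (g j) (f i) : ℝ) = _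
      rw [hgj, real_inner_smul_left]
    rw [hgj, hinner, smul_smul]
    congr 1
    simp only [RCLike.ofReal_real_eq_id, id_eq]
    rw [div_eq_mul_inv]
    ring
  -- orthogonality of u and w
  have horthog : ∀ j, j < i → (inner ℝ u (g j) : ℝ) = 0 := by
    intro j hj
    have hgj : g j = ‖gramSchmidt ℝ f j‖⁻¹ • gramSchmidt ℝ f j := rfl
    rw [hgj, real_inner_smul_right, gramSchmidt_orthogonal ℝ f (ne_of_gt hj), mul_zero]
  have huw : (inner ℝ u w : ℝ) = 0 := by
    rw [hw, inner_sum]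
    apply Finset.sum_eq_zero
    intro j hj
    rw [real_inner_smul_right, horthog j (Finset.mem_Iio.mp hj), mul_zero]
  -- Pythagoras
  have hpyth : 1 = ‖u‖^2 + ‖w‖^2 := by
    have h1 : ‖f i‖^2 = 1 := by rw [hn i]; norm_num
    rw [hdec] at h1
    rw [← h1, norm_add_sq_real, huw]
    ring
  -- norm of w squared
  have hw2 : ‖w‖^2 = ∑ j ∈ Finset.Iio i, (c j)^2 := by
    have := hON.inner_sum c c (Finset.Iio i)
    rw [← hw] at this
    rw [← real_inner_self_eq_norm_sq, this]
    apply Finset.sum_congr rfl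
    intro j _
    simp [sq]
  have hwle1 : ‖w‖^2 ≤ 1 := by nlinarith [sq_nonneg ‖u‖]
  -- norm of difference squared
  have hdiffeq : ‖g i - f i‖^2 = (1 - ‖u‖)^2 + ‖w‖^2 := by
    have h1 : g i - f i = (‖u‖⁻¹ - 1) • u - w := by
      rw [hgi, hdec]; module
    rw [h1, norm_sub_sq_real, real_inner_smul_left, huw, norm_smul, Real.norm_eq_abs, mul_pow,
      sq_abs]
    have h2 : (‖u‖⁻¹ - 1)^2 * ‖u‖^2 = (1 - ‖u‖)^2 := by
      have : ‖u‖⁻¹ * ‖u‖ = 1 := inv_mul_cancel₀ (ne_of_gt hupos)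
      nlinarith [this]
    nlinarith [h2]
  have hkey : ‖g i - f i‖^2 ≤ 2 * ‖w‖^2 := by
    nlinarith [hupos, sq_nonneg (1 - ‖u‖), sq_nonneg ‖u‖]
  -- bound on coefficients
  have hcb : ∀ j, j < i → |c j| ≤ ((2:ℝ)^((j:ℕ)+1) - 1) * δ := by
    intro j hj
    have hsplit : c j = (inner ℝ (g j - f j) (f i) : ℝ) + (inner ℝ (f j) (f i) : ℝ) := by
      rw [hc, inner_sub_left]; ring
    rw [hsplit]
    calc |(inner ℝ (g j - f j) (f i) : ℝ) + (inner ℝ (f j) (f i) : ℝ)|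
        ≤ |(inner ℝ (g j - f j) (f i) : ℝ)| + |(inner ℝ (f j) (f i) : ℝ)| := abs_add_le _ _
      _ ≤ ‖g j - f j‖ * ‖f i‖ + δ := by
          gcongr
          · exact abs_real_inner_le_norm _ _
          · exact hip j i (ne_of_lt hj)
      _ ≤ ((2:ℝ)^((j:ℕ)+1) - 2) * δ + δ := by
          rw [hn i, mul_one]
          gcongr
          exact IH j hj
      _ = ((2:ℝ)^((j:ℕ)+1) - 1) * δ := by ring
  -- sum bound
  have hsum : ∑ j ∈ Finset.Iio i, (c j)^2 ≤
      (∑ j ∈ Finset.Iio i, ((2:ℝ)^((j:ℕ)+1) - 1)^2) * δ^2 := by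
    rw [Finset.sum_mul]
    apply Finset.sum_le_sum
    intro j hj
    have h1 := hcb j (Finset.mem_Iio.mp hj)
    have h2 : (c j)^2 = |c j|^2 := (sq_abs _).symm
    rw [h2, ← mul_pow]
    exact pow_le_pow_left₀ (abs_nonneg _) h1 2
  have hnum : 2 * ∑ j ∈ Finset.Iio i, ((2:ℝ)^((j:ℕ)+1) - 1)^2 ≤ ((2:ℝ)^((i:ℕ)+1) - 2)^2 := by
    rw [fin_sum_Iio_eq i (fun k => ((2:ℝ)^(k+1) - 1)^2)]
    exact numeric_aux (i : ℕ)
  -- conclude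
  have hR : 0 ≤ ((2:ℝ)^((i:ℕ)+1) - 2) * δ := by
    apply mul_nonneg _ hδ
    have : (2:ℝ)^1 ≤ 2^((i:ℕ)+1) := pow_le_pow_right₀ (by norm_num) (by omega)
    norm_num at this
    linarith
  have hfin : ‖g i - f i‖^2 ≤ (((2:ℝ)^((i:ℕ)+1) - 2) * δ)^2 := by
    calc ‖g i - f i‖^2 ≤ 2 * ‖w‖^2 := hkey
      _ = 2 * ∑ j ∈ Finset.Iio i, (c j)^2 := by rw [hw2]
      _ ≤ 2 * ((∑ j ∈ Finset.Iio i, ((2:ℝ)^((j:ℕ)+1) - 1)^2) * δ^2) := by linarith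
      _ = (2 * ∑ j ∈ Finset.Iio i, ((2:ℝ)^((j:ℕ)+1) - 1)^2) * δ^2 := by ring
      _ ≤ ((2:ℝ)^((i:ℕ)+1) - 2)^2 * δ^2 := by
          apply mul_le_mul_of_nonneg_right hnum (sq_nonneg δ)
      _ = (((2:ℝ)^((i:ℕ)+1) - 2) * δ)^2 := by ring
  exact le_of_pow_le_pow_left₀ (by norm_num) hR hfin

noncomputable def tens {ι : Type*} [Fintype ι] (u v : EuclideanSpace ℝ ι) :
    EuclideanSpace ℝ (ι × ι) :=
  (WithLp.equiv 2 _).symm (fun z => u z.1 * v z.2)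

lemma tens_apply {ι : Type*} [Fintype ι] (u v : EuclideanSpace ℝ ι) (z : ι × ι) :
    tens u v z = u z.1 * v z.2 := rfl

lemma tens_sub {ι : Type*} [Fintype ι] (u v : EuclideanSpace ℝ ι) :
    tens u u - tens v v = tens (u - v) u + tens v (u - v) := by
  ext z
  simp only [PiLp.sub_apply, PiLp.add_apply, tens_apply]
  ring

lemma tens_norm {ι : Type*} [Fintype ι] (u v : EuclideanSpace ℝ ι) :
    ‖tens u v‖ = ‖u‖ * ‖v‖ := by
  rw [EuclideanSpace.norm_eq, EuclideanSpace.norm_eq u, EuclideanSpace.norm_eq v,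
    ← Real.sqrt_mul (by positivity)]
  congr 1
  rw [Fintype.sum_prod_type, Finset.sum_mul_sum]
  apply Finset.sum_congr rfl
  intro x _
  apply Finset.sum_congr rfl
  intro y _
  simp only [tens_apply, Real.norm_eq_abs, sq_abs]
  ring

/-- Lemma about M': for nearly orthogonal unit vectors b_i with B_i = vec(b_i b_iᵀ)
linearly independent, there are orthonormal B'_i with ‖B'_i − B_i‖ ≤ (2^i − 2)ε² (1-indexed; here
0-indexed as (2^{i+1} − 2)ε²) and ‖M − M'‖_F ≤ (Σ |ν_i|(2^{i+1} − 4))ε² (0-indexed: 2^{i+2} − 4). -/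
theorem stmt17 {p r : ℕ} (ε : ℝ) (hε : 0 < ε)
    (b : Fin r → EuclideanSpace ℝ (Fin p)) (hunit : ∀ i, ‖b i‖ = 1)
    (hip : ∀ i j, i ≠ j → |(inner ℝ (b i) (b j) : ℝ)| ≤ ε)
    (B : Fin r → EuclideanSpace ℝ (Fin p × Fin p)) (hB : ∀ i x, B i x = b i x.1 * b i x.2)
    (hli : LinearIndependent ℝ B)
    (ν : Fin r → ℝ) :
    ∃ B' : Fin r → EuclideanSpace ℝ (Fin p × Fin p), Orthonormal ℝ B' ∧
      (∀ i : Fin r, ‖B' i - B i‖ ≤ ((2:ℝ) ^ ((i : ℕ) + 1) - 2) * ε ^ 2) ∧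
      Real.sqrt (∑ x, ∑ y,
          ((∑ i, ν i * B i x * B i y) - ∑ i, ν i * B' i x * B' i y) ^ 2) ≤
        (∑ i : Fin r, |ν i| * ((2:ℝ) ^ ((i : ℕ) + 2) - 4)) * ε ^ 2 := by
  haveI : WellFoundedLT (Fin r) := inferInstance
  -- inner products of the B i
  have hBinner : ∀ i j, (inner ℝ (B i) (B j) : ℝ) = (inner ℝ (b i) (b j) : ℝ)^2 := by
    intro i j
    have h1 : (inner ℝ (B i) (B j) : ℝ) = ∑ x : Fin p × Fin p, B i x * B j x := by
      simp [PiLp.inner_apply, mul_comm]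
    have h2 : (inner ℝ (b i) (b j) : ℝ) = ∑ a, b i a * b j a := by
      simp [PiLp.inner_apply, mul_comm]
    rw [h1, h2, Fintype.sum_prod_type, sq, Finset.sum_mul_sum]
    apply Finset.sum_congr rfl; intro x _
    apply Finset.sum_congr rfl; intro y _
    rw [hB, hB]
    ring
  have hBnorm : ∀ i, ‖B i‖ = 1 := by
    intro i
    have h : ‖B i‖^2 = 1 := by
      rw [← real_inner_self_eq_norm_sq, hBinner, real_inner_self_eq_norm_sq, hunit i]
      norm_num
    rw [← Real.sqrt_sq (norm_nonneg (B i)), h, Real.sqrt_one]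
  have hBip : ∀ i j, i ≠ j → |(inner ℝ (B i) (B j) : ℝ)| ≤ ε^2 := by
    intro i j hij
    rw [hBinner, abs_pow]
    exact pow_le_pow_left₀ (abs_nonneg _) (hip i j hij) 2
  -- Gram–Schmidt orthonormalization
  set B' := gramSchmidtNormed ℝ B with hB'
  have hON : Orthonormal ℝ B' := gramSchmidtNormed_orthonormal hli
  have hdist : ∀ i : Fin r, ‖B' i - B i‖ ≤ ((2:ℝ) ^ ((i : ℕ) + 1) - 2) * ε ^ 2 :=
    gs_dist_bound B hli hBnorm (by positivity) hBip
  refine ⟨B', hON, hdist, ?_⟩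
  -- define the difference vectors
  set D : Fin r → EuclideanSpace ℝ ((Fin p × Fin p) × (Fin p × Fin p)) :=
    fun i => tens (B i) (B i) - tens (B' i) (B' i) with hD
  have hDbound : ∀ i : Fin r, ‖D i‖ ≤ ((2:ℝ) ^ ((i : ℕ) + 2) - 4) * ε ^ 2 := by
    intro i
    have h1 : D i = tens (B i - B' i) (B i) + tens (B' i) (B i - B' i) := by
      rw [hD]; exact tens_sub (B i) (B' i)
    calc ‖D i‖ ≤ ‖tens (B i - B' i) (B i)‖ + ‖tens (B' i) (B i - B' i)‖ := by
          rw [h1]; exact norm_add_le _ _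
      _ = ‖B i - B' i‖ * ‖B i‖ + ‖B' i‖ * ‖B i - B' i‖ := by rw [tens_norm, tens_norm]
      _ = 2 * ‖B' i - B i‖ := by rw [hBnorm i, hON.1 i, norm_sub_rev]; ring
      _ ≤ 2 * (((2:ℝ) ^ ((i : ℕ) + 1) - 2) * ε ^ 2) := by
          have := hdist i; linarith
      _ = ((2:ℝ) ^ ((i : ℕ) + 2) - 4) * ε ^ 2 := by ring
  -- rewrite the LHS as a norm
  have hLHS : Real.sqrt (∑ x, ∑ y,
      ((∑ i, ν i * B i x * B i y) - ∑ i, ν i * B' i x * B' i y) ^ 2) =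
      ‖∑ i, ν i • D i‖ := by
    rw [EuclideanSpace.norm_eq]
    congr 1
    conv_rhs => rw [Fintype.sum_prod_type]
    apply Finset.sum_congr rfl; intro x _
    apply Finset.sum_congr rfl; intro y _
    have happ : (∑ i, ν i • D i) (x, y) = ∑ i, ν i * D i (x, y) := by
      rw [WithLp.ofLp_sum, Finset.sum_apply]
      apply Finset.sum_congr rfl; intro i _
      rw [PiLp.smul_apply, smul_eq_mul]
    rw [Real.norm_eq_abs, sq_abs, happ]
    congr 1
    rw [← Finset.sum_sub_distrib]
    apply Finset.sum_congr rfl; intro i _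
    rw [hD]
    simp only [PiLp.sub_apply, tens_apply]
    ring
  rw [hLHS]
  calc ‖∑ i, ν i • D i‖ ≤ ∑ i, ‖ν i • D i‖ := norm_sum_le _ _
    _ = ∑ i, |ν i| * ‖D i‖ := by
        apply Finset.sum_congr rfl; intro i _
        rw [norm_smul, Real.norm_eq_abs]
    _ ≤ ∑ i, |ν i| * (((2:ℝ) ^ ((i : ℕ) + 2) - 4) * ε ^ 2) := by
        apply Finset.sum_le_sum
        intro i _
        exact mul_le_mul_of_nonneg_left (hDbound i) (abs_nonneg _)
    _ = (∑ i : Fin r, |ν i| * ((2:ℝ) ^ ((i : ℕ) + 2) - 4)) * ε ^ 2 := by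
        rw [Finset.sum_mul]
        apply Finset.sum_congr rfl; intro i _
        ring
end
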